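/- Let G be an abelian group, A a commutative ring, M an A-module, and φ : G → A^× a group homomorphism, giving A and M the G-module structures via multiplication by φ(g). If H_0(G, A) = 0, then H_n(G, M) = 0 for all n ≥ 0. -/

import Mathlib

/-!
As `G` is abelian, every `g ∈ G` acts on each representation by an endomorphism, naturally in the
representation. On coinvariants this endomorphism is the identity, so, lifting it levelwise to
projective resolutions, it is the identity on every `H_n(G, -)`. Scalar multiplication gives a ring
map `A → End H_n(G, M)` sending each `φ g` to the action of `g`, i.e. to `1`; so it kills every
`φ(g)a - a`, hence the subgroup defining `H₀(G, A)`. If `H₀(G, A) = 0`, it kills `1`, and the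
identity of `H_n(G, M)` is zero.
-/

open CategoryTheory

noncomputable instance repEnoughProjectives (G : Type) [Group G] :
    EnoughProjectives (Rep.{0} ℤ G) :=
  (Rep.equivalenceModuleMonoidAlgebra (k := ℤ) (G := G)).enoughProjectives_iff.mpr
    inferInstance

/-- The subgroup of a representation generated by the elements `g • m - m`. -/
noncomputable def coinvRel {G : Type} [Group G] (M : Rep.{0} ℤ G) : AddSubgroup M :=
  AddSubgroup.closure {x : M | ∃ (g : G) (m : M), x = M.ρ g m - m}

/-- The underlying additive map of a morphism of representations. -/
noncomputable def repHom {G : Type} [Group G] {M N : Rep.{0} ℤ G} (f : M ⟶ N) : M →+ N :=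
  AddMonoidHom.mk' (fun x => f.hom x) (map_add f.hom)

lemma repHom_comm {G : Type} [Group G] {M N : Rep.{0} ℤ G} (f : M ⟶ N) (g : G) (m : M) :
    repHom f (M.ρ g m) = N.ρ g (repHom f m) := by
  exact Rep.hom_comm_apply f g m

lemma coinvRel_le {G : Type} [Group G] {M N : Rep.{0} ℤ G} (f : M ⟶ N) :
    coinvRel M ≤ (coinvRel N).comap (repHom f) := by
  rw [coinvRel, AddSubgroup.closure_le]
  rintro x ⟨g, m, rfl⟩
  simp only [Set.mem_setOf_eq, AddSubgroup.coe_comap, Set.mem_preimage, SetLike.mem_coe,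
    map_sub, repHom_comm]
  exact AddSubgroup.subset_closure ⟨g, repHom f m, rfl⟩

/-- The induced map on coinvariants. -/
noncomputable def coinvMap {G : Type} [Group G] {M N : Rep.{0} ℤ G} (f : M ⟶ N) :
    (M ⧸ coinvRel M) →+ (N ⧸ coinvRel N) :=
  QuotientAddGroup.map _ _ (repHom f) (coinvRel_le f)

/-- The coinvariants functor `Rep ℤ G ⥤ Ab`, `M ↦ M_G`. -/
noncomputable def coinvFunctor (G : Type) [Group G] : Rep.{0} ℤ G ⥤ AddCommGrpCat where
  obj M := AddCommGrpCat.of (M ⧸ coinvRel M)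
  map {M N} f := AddCommGrpCat.ofHom (coinvMap f)
  map_id M := by
    ext x
    rfl
  map_comp {M N P} f g := by
    ext x
    rfl

noncomputable instance coinvAdditive (G : Type) [Group G] : (coinvFunctor G).Additive where
  map_add := by
    intros M N f g
    ext x
    induction x using QuotientAddGroup.induction_on with
    | H m => rfl

/-- Group homology `H_n(G, M)`, as the left derived functors of coinvariants. -/
noncomputable def derivedHomology (G : Type) [Group G] (n : ℕ) (M : Rep.{0} ℤ G) : AddCommGrpCat :=
  ((coinvFunctor G).leftDerived n).obj M

/-- The representation of `G` on an `A`-module `M` through a homomorphism `φ : G → Aˣ`: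
`g • m = φ g • m`. -/
noncomputable def repOfUnits (G : Type) [CommGroup G] (A : Type) [CommRing A]
    (M : Type) [AddCommGroup M] [Module A M] (φ : G →* Aˣ) : Rep.{0} ℤ G :=
  Rep.of (X := M)
    { toFun := fun g =>
        { toFun := fun m => (φ g : A) • m
          map_add' := fun x y => smul_add _ x y
          map_smul' := fun c x => smul_comm ((φ g : A)) c x |>.symm ▸ (smul_comm c ((φ g : A)) x).symm }
      map_one' := by ext m; simp
      map_mul' := fun g h => by ext m; simp [mul_smul] }

namespace CategoryTheory

instance projectiveResolutions_additive {C : Type*} [Category C] [Abelian C]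
    [HasProjectiveResolutions C] : (projectiveResolutions C).Additive where
  map_add {_ _ f g} :=
    (HomotopyCategory.eq_of_homotopy _ _ (ProjectiveResolution.liftHomotopy (f + g) _ _
      (by simp) (by simp [Preadditive.add_comp, Preadditive.comp_add]))).trans
      (HomotopyCategory.quotient _ _).map_add

instance Functor.leftDerived_additive {C D : Type*} [Category C] [Category D] [Abelian C]
    [HasProjectiveResolutions C] [Abelian D] (F : C ⥤ D) [F.Additive] (n : ℕ) :
    (F.leftDerived n).Additive := by
  unfold Functor.leftDerived Functor.leftDerivedToHomotopyCategory
  infer_instance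

def Functor.mapEndRingHom {C D : Type*} [Category C] [Category D] [Preadditive C]
    [Preadditive D] (F : C ⥤ D) [F.Additive] (X : C) : End X →+* End (F.obj X) :=
  { F.mapEnd X with
    map_zero' := F.map_zero X X
    map_add' := fun _ _ => F.map_add }

theorem Functor.leftDerived_map_app_eq_id {C D : Type*} [Category C] [Category D] [Abelian C]
    [HasProjectiveResolutions C] [Abelian D] (F : C ⥤ D) [F.Additive] {τ : 𝟭 C ⟶ 𝟭 C}
    (hτ : ∀ X, F.map (τ.app X) = 𝟙 _) (n : ℕ) (X : C) :
    (F.leftDerived n).map (τ.app X) = 𝟙 _ := by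
  let P := projectiveResolution X
  let τP : P.complex ⟶ P.complex := (NatTrans.mapHomologicalComplex τ _).app P.complex
  have hτP : τP ≫ P.π = P.π ≫ (ChainComplex.single₀ C).map (τ.app X) := by
    ext
    rw [HomologicalComplex.comp_f, HomologicalComplex.comp_f, ChainComplex.single₀_map_f_zero]
    exact (τ.naturality _).symm
  have hFτP : (F.mapHomologicalComplex _).map τP = 𝟙 _ := by
    ext i
    exact hτ _
  rw [F.leftDerived_map_eq n _ τP hτP, Functor.comp_map, hFτP, CategoryTheory.Functor.map_id,
    Category.id_comp, Iso.hom_inv_id]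
  rfl

end CategoryTheory

def Rep.actionNatTrans {k G : Type*} [CommRing k] [CommMonoid G] (g : G) :
    𝟭 (Rep k G) ⟶ 𝟭 (Rep k G) where
  app X := X.applyAsHom g
  naturality _ _ f := (Rep.applyAsHom_comm f g).symm

lemma coinvFunctor_map_applyAsHom {G : Type} [CommGroup G] (g : G) (X : Rep.{0} ℤ G) :
    (coinvFunctor G).map (X.applyAsHom g) = 𝟙 _ := by
  ext x
  induction x using QuotientAddGroup.induction_on with
  | H m =>
    refine (QuotientAddGroup.eq (s := coinvRel X)).mpr ?_
    rw [neg_add_eq_sub, ← neg_sub]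
    exact neg_mem (AddSubgroup.subset_closure ⟨g, m, rfl⟩)

def repOfUnitsSMulEnd (G : Type) [CommGroup G] (A : Type) [CommRing A] (M : Type) [AddCommGroup M]
    [Module A M] (φ : G →* Aˣ) : A →+* End (repOfUnits G A M φ) where
  toFun a := Rep.ofHom
    ⟨DistribSMul.toLinearMap ℤ M a, fun g => LinearMap.ext fun m => smul_comm a (φ g : A) m⟩
  map_one' := Rep.hom_ext <| by ext m; exact one_smul A m
  map_mul' a b := Rep.hom_ext <| by ext m; exact mul_smul a b m
  map_zero' := Rep.hom_ext <| by ext m; exact zero_smul A m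
  map_add' a b := Rep.hom_ext <| by ext m; exact add_smul a b m

lemma repOfUnitsSMulEnd_units {G : Type} [CommGroup G] {A : Type} [CommRing A] {M : Type}
    [AddCommGroup M] [Module A M] (φ : G →* Aˣ) (g : G) :
    repOfUnitsSMulEnd G A M φ (φ g) = (repOfUnits G A M φ).applyAsHom g :=
  rfl

lemma map_eq_zero_of_mem_coinvRel {G : Type} [CommGroup G] {A : Type} [CommRing A] {R : Type*}
    [Ring R] {φ : G →* Aˣ} (ψ : A →+* R) (hψ : ∀ g, ψ (φ g) = 1) {a : A}
    (ha : a ∈ coinvRel (repOfUnits G A A φ)) : ψ a = 0 := by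
  have hgen (g : G) (b : A) : ψ ((φ g : A) * b - b) = 0 := by
    rw [map_sub, map_mul, hψ, one_mul, sub_self]
  suffices coinvRel (repOfUnits G A A φ) ≤ (ψ : A →+ R).ker from this ha
  refine (AddSubgroup.closure_le _).mpr ?_
  rintro _ ⟨g, b, rfl⟩
  exact hgen g b

/-- Suslin's lemma: if `G` is abelian, `A` a commutative ring, `M` an `A`-module, and
`φ : G →* Aˣ` makes `A` and `M` into `G`-modules with `H₀(G, A) = 0`, then
`H_n(G, M) = 0` for all `n`. -/
theorem stmt_5 (G : Type) [CommGroup G] (A : Type) [CommRing A]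
    (M : Type) [AddCommGroup M] [Module A M] (φ : G →* Aˣ)
    (h0 : coinvRel (repOfUnits G A A φ) = ⊤) :
    ∀ n : ℕ, Subsingleton (derivedHomology G n (repOfUnits G A M φ)) := by
  intro n
  let F := (coinvFunctor G).leftDerived n
  let ψ := (F.mapEndRingHom _).comp (repOfUnitsSMulEnd G A M φ)
  have hψ (g : G) : ψ (φ g) = 1 := by
    change F.map (repOfUnitsSMulEnd G A M φ (φ g)) = 𝟙 _
    rw [repOfUnitsSMulEnd_units]
    exact (coinvFunctor G).leftDerived_map_app_eq_id (τ := Rep.actionNatTrans g)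
      (coinvFunctor_map_applyAsHom g) n _
  have h1 : ψ 1 = 0 := map_eq_zero_of_mem_coinvRel ψ hψ (h0 ▸ AddSubgroup.mem_top 1)
  rw [map_one] at h1
  exact AddCommGrpCat.isZero_iff_subsingleton.mp ((Limits.IsZero.iff_id_eq_zero _).mpr h1)
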